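/- Let γ, λ be real numbers with 0 < γ < 2, λ ≠ 0 and λ² > 3γ, and set E = (√(3/2)·γ/λ, √(3γ(2 − γ)/(2λ²))). Then E is a fixed point of the map W, i.e. W(E) = E. Moreover, writing (x, y) = E, the dark-energy density parameter Ω_d = x² + y² equals 3γ/λ² and the dark-energy equation of state ω_d = (x² − y²)/(x² + y²) equals γ − 1. -/

import Mathlib

noncomputable def f (γ lam x y : ℝ) : ℝ :=
  (3/2) * x * (2*x^2 + γ*(1 - x^2 - y^2)) - 3*x + Real.sqrt (3/2) * lam * y^2

noncomputable def g (γ lam x y : ℝ) : ℝ :=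
  (3/2) * y * (2*x^2 + γ*(1 - x^2 - y^2)) - Real.sqrt (3/2) * lam * x * y

/-- The unit-step Euler discretization map W(x,y) = (x + f(x,y), y + g(x,y)). -/
noncomputable def W (γ lam : ℝ) (p : ℝ × ℝ) : ℝ × ℝ :=
  (p.1 + f γ lam p.1 p.2, p.2 + g γ lam p.1 p.2)

/-- E = (√(3/2)·γ/λ, √(3γ(2 − γ)/(2λ²))) is a fixed point of W with
Ω_d = 3γ/λ² and ω_d = γ − 1. -/
theorem stmt_4 (γ lam : ℝ) (hγ0 : 0 < γ) (hγ2 : γ < 2) (hlam : lam ≠ 0)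
    (h : lam^2 > 3*γ) :
    W γ lam (Real.sqrt (3/2) * γ / lam, Real.sqrt (3*γ*(2 - γ)/(2*lam^2))) =
      (Real.sqrt (3/2) * γ / lam, Real.sqrt (3*γ*(2 - γ)/(2*lam^2))) ∧
    (Real.sqrt (3/2) * γ / lam)^2 + (Real.sqrt (3*γ*(2 - γ)/(2*lam^2)))^2 = 3*γ/lam^2 ∧
    ((Real.sqrt (3/2) * γ / lam)^2 - (Real.sqrt (3*γ*(2 - γ)/(2*lam^2)))^2) /
        ((Real.sqrt (3/2) * γ / lam)^2 + (Real.sqrt (3*γ*(2 - γ)/(2*lam^2)))^2) = γ - 1 := by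

  have hl2 : lam^2 ≠ 0 := pow_ne_zero 2 hlam
  have hl2 : lam^2 ≠ 0 := pow_ne_zero 2 hlam
  set s := Real.sqrt (3/2) with hs
  set t := Real.sqrt (3*γ*(2 - γ)/(2*lam^2)) with ht
  set x := s * γ / lam with hxdef
  have hs2 : s^2 = 3/2 := Real.sq_sqrt (by norm_num)
  have ht2 : t^2 = 3*γ*(2 - γ)/(2*lam^2) :=
    Real.sq_sqrt (div_nonneg (by nlinarith) (by positivity))
  have hx2' : x^2 = 3*γ^2/(2*lam^2) := by
    rw [hxdef, div_pow, mul_pow, hs2]; field_simp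
  have hΩ : x^2 + t^2 = 3*γ/lam^2 := by
    rw [hx2', ht2]; field_simp; ring
  have hkey : 2*x^2 + γ*(1 - x^2 - t^2) = γ := by
    rw [show 2*x^2 + γ*(1 - x^2 - t^2) = 2*x^2 - γ*(x^2 + t^2) + γ by ring,
      hΩ, hx2']
    field_simp; ring
  have hsx : s * lam * x = 3/2 * γ := by
    rw [hxdef, show s*lam*(s*γ/lam) = s^2*γ*(lam/lam) by ring, div_self hlam, hs2]
    ring
  have hst : s * lam * t^2 = 3*γ*(2 - γ)*s/(2*lam) := by
    rw [ht2]; field_simp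
  refine ⟨?_, hΩ, ?_⟩
  · have hf : f γ lam x t = 0 := by
      show (3/2) * x * (2*x^2 + γ*(1 - x^2 - t^2)) - 3*x + s * lam * t^2 = 0
      rw [hkey, hst, hxdef]
      ring
    have hg : g γ lam x t = 0 := by
      show (3/2) * t * (2*x^2 + γ*(1 - x^2 - t^2)) - s * lam * x * t = 0
      rw [hkey, hsx]; ring
    show (x + f γ lam x t, t + g γ lam x t) = (x, t)
    rw [hf, hg]; simp
  · rw [hΩ, hx2', ht2, div_eq_iff (by rw [div_ne_zero_iff]; exact ⟨by positivity, hl2⟩)]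
    field_simp; ring
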